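/- Let p and p̃ be probability mass functions on a finite type V, let ε_rec > 0 with p̃(x) ≥ ε_rec for all x, let C > 0, α > 0, and let k be a positive real with k ≥ (2C/ε_rec)^{1/α}. If TV(p, p̃) ≤ C·k^{−α}, then KL(p‖p̃) ≤ (2/ε_rec)·C²·k^{−2α}. -/

import Mathlib

open Finset

/-!
Since `∑ (p - p̃) = 0`, every single deviation `|p x - p̃ x|` is at most `TV(p, p̃)`.
With `log t ≤ t - 1`, KL is bounded by the χ²-divergence `∑ (p - p̃)² / p̃`, and the
floor gives `χ² ≤ ∑ TV · |p - p̃| / εrec = 2 TV² / εrec`; squaring the TV bound doubles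
the exponent.
-/

/-- Total variation distance between two pmfs on a finite type. -/
noncomputable def TV {V : Type*} [Fintype V] (p q : V → ℝ) : ℝ :=
  (1 / 2) * ∑ x, |p x - q x|

/-- Kullback–Leibler divergence between two pmfs on a finite type. -/
noncomputable def KL {V : Type*} [Fintype V] (p q : V → ℝ) : ℝ :=
  ∑ x, p x * Real.log (p x / q x)

theorem abs_le_half_sum_abs_of_sum_eq_zero {ι : Type*} [Fintype ι] {f : ι → ℝ}
    (hf : ∑ i, f i = 0) (i : ι) : |f i| ≤ (1 / 2) * ∑ j, |f j| := by
  classical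
  have hrest : |f i| ≤ ∑ j ∈ univ.erase i, |f j| := by
    have : f i = -∑ j ∈ univ.erase i, f j := by
      rw [eq_neg_iff_add_eq_zero, add_sum_erase _ _ (mem_univ i), hf]
    rw [this, abs_neg]
    exact abs_sum_le_sum_abs _ _
  have := add_sum_erase univ (fun j => |f j|) (mem_univ i)
  linarith

noncomputable def chiSq {V : Type*} [Fintype V] (p q : V → ℝ) : ℝ :=
  ∑ x, (p x - q x) ^ 2 / q x

section Divergences

variable {V : Type*} [Fintype V] {p q : V → ℝ}

lemma TV_nonneg : 0 ≤ TV p q := by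
  unfold TV; positivity

lemma sum_sub_eq_zero_of_sum_eq (hpq : ∑ x, p x = ∑ x, q x) : ∑ x, (p x - q x) = 0 := by
  rw [sum_sub_distrib, hpq, sub_self]

lemma abs_sub_le_TV (hpq : ∑ x, p x = ∑ x, q x) (x : V) : |p x - q x| ≤ TV p q :=
  abs_le_half_sum_abs_of_sum_eq_zero (f := fun x => p x - q x) (sum_sub_eq_zero_of_sum_eq hpq) x

lemma mul_log_div_le {a b : ℝ} (ha : 0 ≤ a) (hb : 0 < b) :
    a * Real.log (a / b) ≤ (a - b) ^ 2 / b + (a - b) := by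
  have hrhs : (a - b) ^ 2 / b + (a - b) = a * (a / b - 1) := by
    field_simp; ring
  rw [hrhs]
  rcases ha.eq_or_lt with rfl | ha
  · simp
  · exact mul_le_mul_of_nonneg_left (Real.log_le_sub_one_of_pos (div_pos ha hb)) ha.le

lemma KL_le_chiSq (hp : ∀ x, 0 ≤ p x) (hq : ∀ x, 0 < q x) (hpq : ∑ x, p x = ∑ x, q x) :
    KL p q ≤ chiSq p q := by
  calc KL p q ≤ ∑ x, ((p x - q x) ^ 2 / q x + (p x - q x)) :=
        sum_le_sum fun x _ => mul_log_div_le (hp x) (hq x)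
    _ = chiSq p q := by
        rw [sum_add_distrib, sum_sub_eq_zero_of_sum_eq hpq, add_zero, chiSq]

lemma chiSq_le_two_mul_TV_sq_div {ε : ℝ} (hε : 0 < ε) (hfloor : ∀ x, ε ≤ q x)
    (hpq : ∑ x, p x = ∑ x, q x) :
    chiSq p q ≤ 2 * TV p q ^ 2 / ε := by
  calc chiSq p q ≤ ∑ x, TV p q * |p x - q x| / ε := by
        refine sum_le_sum fun x _ =>
          div_le_div₀ (mul_nonneg TV_nonneg (abs_nonneg _)) ?_ hε (hfloor x)
        rw [← sq_abs, sq]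
        exact mul_le_mul_of_nonneg_right (abs_sub_le_TV hpq x) (abs_nonneg _)
    _ = 2 * TV p q ^ 2 / ε := by
        rw [← sum_div, ← mul_sum]
        unfold TV
        ring

lemma KL_le_two_div_mul_TV_sq {ε : ℝ} (hε : 0 < ε) (hp : ∀ x, 0 ≤ p x)
    (hfloor : ∀ x, ε ≤ q x) (hpq : ∑ x, p x = ∑ x, q x) :
    KL p q ≤ 2 / ε * TV p q ^ 2 := by
  calc KL p q ≤ chiSq p q :=
        KL_le_chiSq hp (fun x => hε.trans_le (hfloor x)) hpq
    _ ≤ 2 * TV p q ^ 2 / ε := chiSq_le_two_mul_TV_sq_div hε hfloor hpq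
    _ = 2 / ε * TV p q ^ 2 := by ring

end Divergences

theorem sink_plus_recent_kl_general {V : Type*} [Fintype V] (p ptilde : V → ℝ)
    (εrec C α k : ℝ)
    (hεrec : 0 < εrec) (hk0 : 0 < k)
    (hp0 : ∀ x, 0 ≤ p x) (hp1 : ∑ x, p x = 1)
    (hq1 : ∑ x, ptilde x = 1)
    (hfloor : ∀ x, εrec ≤ ptilde x)
    (hTV : TV p ptilde ≤ C * k ^ (-α)) :
    KL p ptilde ≤ (2 / εrec) * C ^ 2 * k ^ (-(2 * α)) := by
  have hpow : k ^ (-(2 * α)) = (k ^ (-α)) ^ 2 := by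
    rw [← Real.rpow_mul_natCast hk0.le]; ring_nf
  calc KL p ptilde ≤ 2 / εrec * TV p ptilde ^ 2 :=
        KL_le_two_div_mul_TV_sq hεrec hp0 hfloor (hp1.trans hq1.symm)
    _ ≤ 2 / εrec * (C * k ^ (-α)) ^ 2 := by
        gcongr
        exact TV_nonneg
    _ = 2 / εrec * C ^ 2 * k ^ (-(2 * α)) := by rw [hpow]; ring

/-- Sink-plus-recent KL bound, bounded-floor route: with reconstruction floor
`εrec`, budget `k ≥ (2C/εrec)^{1/α}` and `TV(p,p̃) ≤ C·k^{−α}`, one has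
`KL(p‖p̃) ≤ (2/εrec)·C²·k^{−2α}`. -/
theorem sink_plus_recent_kl {V : Type*} [Fintype V] (p ptilde : V → ℝ)
    (εrec C α k : ℝ)
    (hεrec : 0 < εrec) (hC : 0 < C) (hα : 0 < α) (hk0 : 0 < k)
    (hp0 : ∀ x, 0 ≤ p x) (hp1 : ∑ x, p x = 1)
    (hq0 : ∀ x, 0 ≤ ptilde x) (hq1 : ∑ x, ptilde x = 1)
    (hfloor : ∀ x, εrec ≤ ptilde x)
    (hk : (2 * C / εrec) ^ (1 / α) ≤ k)
    (hTV : TV p ptilde ≤ C * k ^ (-α)) :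
    KL p ptilde ≤ (2 / εrec) * C ^ 2 * k ^ (-(2 * α)) :=
  sink_plus_recent_kl_general p ptilde εrec C α k hεrec hk0 hp0 hp1 hq1 hfloor hTV
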